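/- For every c > 3^{4/3}/2 and every q ∈ 𝔯 with H_{c,0}(q) = 0, one has v(q)ᵀ 𝓗(q) v(q) > 0, where v(q) = (q₂ + q₂/|q|³, 2q₁ - q₁/|q|³). -/

import Mathlib

open Matrix

noncomputable section

/-- Euclidean norm of a point of `ℝ²`. -/
def nrm (q : ℝ × ℝ) : ℝ := Real.sqrt (q.1 ^ 2 + q.2 ^ 2)

/-- Hill's region `𝔯`. -/
def HillRegion : Set (ℝ × ℝ) :=
  {q | (3:ℝ) ^ ((4:ℝ)/3) / 2 < 1 / nrm q + (3/2) * q.1 ^ 2 ∧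
       |q.1| < (3:ℝ) ^ (-(1:ℝ)/3) ∧ |q.2| < 2 * (3:ℝ) ^ (-(4:ℝ)/3)}

/-- The Hessian matrix `𝓗(q)` of `H_{c,0}` at `q`. -/
def Hmat (q : ℝ × ℝ) : Matrix (Fin 2) (Fin 2) ℝ :=
  (1 / (nrm q) ^ 5) •
    !![-2 * (nrm q) ^ 5 + (nrm q) ^ 2 - 3 * q.1 ^ 2, -3 * q.1 * q.2;
       -3 * q.1 * q.2, (nrm q) ^ 5 + (nrm q) ^ 2 - 3 * q.2 ^ 2]

/-- The tangent vector `v(q) = (q₂ + q₂/|q|³, 2q₁ - q₁/|q|³)`. -/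
def v (q : ℝ × ℝ) : Fin 2 → ℝ :=
  ![q.2 + q.2 / (nrm q) ^ 3, 2 * q.1 - q.1 / (nrm q) ^ 3]

/-! With `a = q₁²|q|` and `b = |q|³`, eliminating `q₂² = |q|² - q₁²` turns `v(q)ᵀ 𝓗(q) v(q)` into
`N(a, b) / |q|⁷` for a cubic polynomial `N`. Writing `t = 3^{1/3}`, the two inequalities of Hill's
region involving `q₁` read `3t|q| < 2 + 3a` and `t|q₁| < 1`; together they force `3|q| < t²`.
Cubing gives `0 ≤ a ≤ b < 1/3` and `81 b < (2 + 3a)³`, and on that region `N > 0`. -/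

def tangentialNumerator (a b : ℝ) : ℝ :=
  27 * a ^ 2 - 3 * a - 24 * a * b + 6 * a * b ^ 2 + 1 - 3 * b ^ 2 - 2 * b ^ 3

theorem nrm_sq (q : ℝ × ℝ) : nrm q ^ 2 = q.1 ^ 2 + q.2 ^ 2 :=
  Real.sq_sqrt (by positivity)

theorem v_dotProduct_Hmat_mulVec_v {q : ℝ × ℝ} (hq : nrm q ≠ 0) :
    v q ⬝ᵥ Hmat q *ᵥ v q = tangentialNumerator (q.1 ^ 2 * nrm q) (nrm q ^ 3) / nrm q ^ 7 := by
  have hy : q.2 ^ 2 = nrm q ^ 2 - q.1 ^ 2 := by linarith [nrm_sq q]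
  simp only [v, Hmat, tangentialNumerator, mulVec, dotProduct, Fin.sum_univ_two, Matrix.smul_apply,
    cons_val_zero, cons_val_one, of_apply, cons_val', cons_val_fin_one, smul_eq_mul]
  set r := nrm q
  field_simp
  linear_combination ((r ^ 3 + 1) * ((r ^ 3 + 1) * (r ^ 2 * (1 - 2 * r ^ 3) - 3 * q.1 ^ 2)
      - 3 * q.1 ^ 2 * (2 * r ^ 3 - 1)) - 3 * q.1 ^ 2 * (2 * r ^ 3 - 1) * (3 * r ^ 3)) * hy

theorem tangentialNumerator_pos {a b : ℝ} (ha : 0 ≤ a) (hab : a ≤ b) (hb : 3 * b < 1)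
    (hcube : 81 * b < (2 + 3 * a) ^ 3) : 0 < tangentialNumerator a b := by
  unfold tangentialNumerator
  nlinarith [pow_nonneg ha 3, sq_nonneg (a + b)]

theorem cbrt_three_pow_three : ((3:ℝ) ^ ((1:ℝ)/3)) ^ 3 = 3 := by
  rw [← Real.rpow_natCast, ← Real.rpow_mul (by norm_num)]
  norm_num

theorem three_rpow_four_thirds : (3:ℝ) ^ ((4:ℝ)/3) = 3 * 3 ^ ((1:ℝ)/3) := by
  rw [show (4:ℝ)/3 = 1 + 1/3 by norm_num, Real.rpow_add (by norm_num), Real.rpow_one]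

theorem three_rpow_neg_one_third : (3:ℝ) ^ (-(1:ℝ)/3) = 1 / 3 ^ ((1:ℝ)/3) := by
  rw [neg_div, Real.rpow_neg (by norm_num), inv_eq_one_div]

theorem hill_cube_bounds {t r x : ℝ} (ht : t ^ 3 = 3) (ht0 : 0 < t) (hr : 0 < r)
    (hE : 3 * t / 2 < 1 / r + 3 / 2 * x ^ 2) (hx : t ^ 2 * x ^ 2 < 1) :
    3 * r ^ 3 < 1 ∧ 81 * r ^ 3 < (2 + 3 * (x ^ 2 * r)) ^ 3 := by
  have hE' : 3 * t * r < 2 + 3 * (x ^ 2 * r) := by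
    have := mul_lt_mul_of_pos_right hE (by positivity : (0:ℝ) < 2 * r)
    field_simp at this
    linarith
  -- multiply `hE'` by `t²`: `9r < 2t² + 3t²x²r ≤ 2t² + 3r`
  have h3r : 3 * r < t ^ 2 := by
    nlinarith [mul_lt_mul_of_pos_right hE' (pow_pos ht0 2), mul_nonneg (sub_nonneg.2 hx.le) hr.le]
  constructor
  · nlinarith [pow_lt_pow_left₀ h3r (by positivity) three_ne_zero]
  · calc 81 * r ^ 3 = (3 * t * r) ^ 3 := by rw [mul_pow, mul_pow, ht]; ring
      _ < _ := pow_lt_pow_left₀ hE' (by positivity) three_ne_zero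

theorem cube_bounds_of_mem_hillRegion {q : ℝ × ℝ} (hq : q ∈ HillRegion) :
    0 < nrm q ∧ 3 * nrm q ^ 3 < 1 ∧ 81 * nrm q ^ 3 < (2 + 3 * (q.1 ^ 2 * nrm q)) ^ 3 := by
  obtain ⟨hE, hx, -⟩ := hq
  rw [three_rpow_four_thirds] at hE
  rw [three_rpow_neg_one_third] at hx
  set t : ℝ := 3 ^ ((1:ℝ)/3)
  have ht0 : 0 < t := by positivity
  rw [lt_div_iff₀' ht0] at hx
  have hx2 : t ^ 2 * q.1 ^ 2 < 1 := by
    rw [← sq_abs q.1, ← mul_pow]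
    exact pow_lt_one₀ (by positivity) hx two_ne_zero
  have hr : 0 < nrm q := by
    refine (Real.sqrt_nonneg _).lt_of_ne fun h : 0 = nrm q ↦ ?_
    rw [← h, div_zero, zero_add] at hE
    nlinarith [cbrt_three_pow_three]
  exact ⟨hr, hill_cube_bounds cbrt_three_pow_three ht0 hr hE hx2⟩

theorem tangential_hessian_positive_p_zero_general (q : ℝ × ℝ) (hq : q ∈ HillRegion) :
    0 < (v q) ⬝ᵥ (Hmat q).mulVec (v q) := by
  obtain ⟨hr, hb, hcube⟩ := cube_bounds_of_mem_hillRegion hq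
  have hab : q.1 ^ 2 * nrm q ≤ nrm q ^ 3 := by nlinarith [nrm_sq q, sq_nonneg q.2]
  rw [v_dotProduct_Hmat_mulVec_v hr.ne']
  exact div_pos (tangentialNumerator_pos (by positivity) hab hb hcube) (by positivity)

/-- Warm-up Lemma: for every `c > 3^{4/3}/2` and every `q ∈ 𝔯` with
`H_{c,0}(q) = -q₁² + (1/2)q₂² - 1/|q| + c = 0`, one has `v(q)ᵀ 𝓗(q) v(q) > 0`. -/
theorem tangential_hessian_positive_p_zero (c : ℝ) (hc : (3:ℝ) ^ ((4:ℝ)/3) / 2 < c)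
    (q : ℝ × ℝ) (hq : q ∈ HillRegion)
    (hH : -q.1 ^ 2 + (1/2) * q.2 ^ 2 - 1 / nrm q + c = 0) :
    0 < (v q) ⬝ᵥ (Hmat q).mulVec (v q) :=
  tangential_hessian_positive_p_zero_general q hq

end
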